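/- (Corollary 4) Let Γ be a finite simple graph, let Σ be a complete graph K_n on n ≥ 2 vertices disjoint from Γ, fix distinct vertices p_1, …, p_k ∈ Γ, and let Γ^Σ be the graph consisting of Γ, Σ, and additional edges joining each p_l (l = 1,…,k) to every vertex of Σ. Assume every vertex of Γ^Σ has positive degree. Then λ = (n+k)/(n+k−1) is an eigenvalue of the normalized Laplacian of Γ^Σ with multiplicity at least n − 1. -/

import Mathlib

open Finset

variable {V W : Type*}

/-- `f` is an eigenfunction of the normalized graph Laplacian of `G` for the eigenvalue `μ`:
`f` is nonzero and `∑_{j ∼ i} f j = (1 - μ) · deg i · f i` for every vertex `i`. -/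
def SimpleGraph.IsLapEigenfunction [Fintype V] (G : SimpleGraph V) [DecidableRel G.Adj]
    (μ : ℝ) (f : V → ℝ) : Prop :=
  f ≠ 0 ∧ ∀ i, ∑ j ∈ G.neighborFinset i, f j = (1 - μ) * (G.degree i : ℝ) * f i

/-- `μ` is an eigenvalue of the normalized graph Laplacian of `G`. -/
def SimpleGraph.IsLapEigenvalue [Fintype V] (G : SimpleGraph V) [DecidableRel G.Adj]
    (μ : ℝ) : Prop :=
  ∃ f : V → ℝ, G.IsLapEigenfunction μ f

/-- The eigenspace of the normalized graph Laplacian of `G` for the eigenvalue `μ`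
(written via the eigenfunction equation); its dimension is the multiplicity of `μ`. -/
def SimpleGraph.lapEigenspace [Fintype V] (G : SimpleGraph V) [DecidableRel G.Adj]
    (μ : ℝ) : Submodule ℝ (V → ℝ) where
  carrier := {f | ∀ i, ∑ j ∈ G.neighborFinset i, f j = (1 - μ) * (G.degree i : ℝ) * f i}
  zero_mem' := by intro i; simp
  add_mem' := by
    intro f g hf hg i
    simp only [Pi.add_apply, Finset.sum_add_distrib, hf i, hg i]
    ring
  smul_mem' := by
    intro c f hf i
    simp only [Pi.smul_apply, smul_eq_mul, ← Finset.mul_sum, hf i]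
    ring

/-- Coupling: the disjoint union of `G` and `H` together with additional edges joining,
for each `l : Fin k`, the vertex `p l` of `G` to every vertex of `H` lying in `c l`. -/
def SimpleGraph.coupleMulti [DecidableEq V] {k : ℕ} (G : SimpleGraph V) (H : SimpleGraph W)
    (p : Fin k → V) (c : Fin k → Finset W) : SimpleGraph (V ⊕ W) where
  Adj x y :=
    match x, y with
    | Sum.inl a, Sum.inl b => G.Adj a b
    | Sum.inl a, Sum.inr b => ∃ l, a = p l ∧ b ∈ c l
    | Sum.inr a, Sum.inl b => ∃ l, b = p l ∧ a ∈ c l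
    | Sum.inr a, Sum.inr b => H.Adj a b
  symm := by
    constructor
    rintro (a | a) (b | b) h
    · exact G.adj_symm h
    · exact h
    · exact h
    · exact H.adj_symm h
  loopless := by
    constructor
    rintro (a | a) h
    · exact G.irrefl h
    · exact H.irrefl h

instance [DecidableEq V] [DecidableEq W] {k : ℕ} (G : SimpleGraph V) (H : SimpleGraph W)
    [DecidableRel G.Adj] [DecidableRel H.Adj] (p : Fin k → V) (c : Fin k → Finset W) :
    DecidableRel (G.coupleMulti H p c).Adj := fun x y =>
  match x, y with
  | Sum.inl a, Sum.inl b => inferInstanceAs (Decidable (G.Adj a b))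
  | Sum.inl a, Sum.inr b => inferInstanceAs (Decidable (∃ l, a = p l ∧ b ∈ c l))
  | Sum.inr a, Sum.inl b => inferInstanceAs (Decidable (∃ l, b = p l ∧ a ∈ c l))
  | Sum.inr a, Sum.inr b => inferInstanceAs (Decidable (H.Adj a b))

section Aux

variable {V : Type*} [Fintype V] [DecidableEq V] (G : SimpleGraph V) [DecidableRel G.Adj]
  {n k : ℕ} (p : Fin k → V)

/-- split a neighbor-sum over the sum type -/
lemma couple_sum_split (f : V ⊕ Fin n → ℝ) (i : V ⊕ Fin n) :
    ∑ j ∈ (G.coupleMulti (⊤ : SimpleGraph (Fin n)) p (fun _ => Finset.univ)).neighborFinset i,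
        f j =
      (∑ v : V, if (G.coupleMulti (⊤ : SimpleGraph (Fin n)) p (fun _ => Finset.univ)).Adj i
          (Sum.inl v) then f (Sum.inl v) else 0) +
      (∑ b : Fin n, if (G.coupleMulti (⊤ : SimpleGraph (Fin n)) p (fun _ => Finset.univ)).Adj i
          (Sum.inr b) then f (Sum.inr b) else 0) := by
  rw [SimpleGraph.neighborFinset_eq_filter, Finset.sum_filter, Fintype.sum_sum_type]

lemma couple_deg_inr (hp : Function.Injective p) (hn : 1 ≤ n) (a : Fin n) :
    ((G.coupleMulti (⊤ : SimpleGraph (Fin n)) p (fun _ => Finset.univ)).degree (Sum.inr a) : ℝ)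
      = (n : ℝ) + (k : ℝ) - 1 := by
  have h := couple_sum_split G p (fun _ => (1 : ℝ)) (Sum.inr a)
  rw [Finset.sum_const, nsmul_eq_mul, mul_one] at h
  rw [SimpleGraph.degree, h]
  have h1 : (∑ v : V, if (G.coupleMulti (⊤ : SimpleGraph (Fin n)) p
      (fun _ => Finset.univ)).Adj (Sum.inr a) (Sum.inl v) then (1:ℝ) else 0) = (k : ℝ) := by
    simp only [SimpleGraph.coupleMulti, Finset.mem_univ, and_true]
    rw [← Finset.sum_filter, Finset.sum_const, nsmul_eq_mul, mul_one]
    congr 1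
    have : Finset.univ.filter (fun v => ∃ l, v = p l) = Finset.univ.image p := by
      ext v; simp [eq_comm]
    rw [this, Finset.card_image_of_injective _ hp, Finset.card_univ, Fintype.card_fin]
  have h2 : (∑ b : Fin n, if (G.coupleMulti (⊤ : SimpleGraph (Fin n)) p
      (fun _ => Finset.univ)).Adj (Sum.inr a) (Sum.inr b) then (1:ℝ) else 0) = (n : ℝ) - 1 := by
    simp only [SimpleGraph.coupleMulti, SimpleGraph.top_adj]
    rw [← Finset.sum_filter, Finset.sum_const, nsmul_eq_mul, mul_one]
    have : Finset.univ.filter (fun b => a ≠ b) = Finset.univ.erase a := by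
      ext b; simp [ne_comm, eq_comm]
    rw [this, Finset.card_erase_of_mem (Finset.mem_univ a), Finset.card_univ, Fintype.card_fin]
    push_cast [hn]
    ring
  rw [h1, h2]; ring

end Aux

section Aux2

variable {V : Type*} [Fintype V] [DecidableEq V] (G : SimpleGraph V) [DecidableRel G.Adj]
  {n k : ℕ} (p : Fin k → V)

lemma couple_mem_eigenspace (hp : Function.Injective p) (hn : 2 ≤ n)
    (g : Fin n → ℝ) (hg : ∑ b, g b = 0) :
    (Sum.elim (0 : V → ℝ) g) ∈ (G.coupleMulti (⊤ : SimpleGraph (Fin n)) p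
      (fun _ => Finset.univ)).lapEigenspace (((n : ℝ) + (k : ℝ)) / ((n : ℝ) + (k : ℝ) - 1)) := by
  have hne : (n : ℝ) + (k : ℝ) - 1 ≠ 0 := by
    have h2 : (2 : ℝ) ≤ (n : ℝ) := by exact_mod_cast hn
    have h0 : (0 : ℝ) ≤ (k : ℝ) := Nat.cast_nonneg k
    nlinarith
  intro i
  rw [couple_sum_split]
  cases i with
  | inl v =>
    have h1 : (∑ w : V, if (G.coupleMulti (⊤ : SimpleGraph (Fin n)) p
        (fun _ => Finset.univ)).Adj (Sum.inl v) (Sum.inl w) then Sum.elim (0 : V → ℝ) g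
        (Sum.inl w) else 0) = 0 := by
      simp
    rw [h1, zero_add]
    simp only [Sum.elim_inl, Pi.zero_apply, mul_zero]
    by_cases h : ∃ l, v = p l
    · have hadj : ∀ b : Fin n, ((G.coupleMulti (⊤ : SimpleGraph (Fin n)) p
          (fun _ => Finset.univ)).Adj (Sum.inl v) (Sum.inr b)) := by
        intro b
        obtain ⟨l, hl⟩ := h
        exact ⟨l, hl, Finset.mem_univ b⟩
      simp only [hadj, if_true, Sum.elim_inr]
      exact hg
    · have hadj : ∀ b : Fin n, ¬ ((G.coupleMulti (⊤ : SimpleGraph (Fin n)) p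
          (fun _ => Finset.univ)).Adj (Sum.inl v) (Sum.inr b)) := by
        intro b hb
        obtain ⟨l, hl, -⟩ := hb
        exact h ⟨l, hl⟩
      simp [hadj]
  | inr a =>
    have h1 : (∑ w : V, if (G.coupleMulti (⊤ : SimpleGraph (Fin n)) p
        (fun _ => Finset.univ)).Adj (Sum.inr a) (Sum.inl w) then Sum.elim (0 : V → ℝ) g
        (Sum.inl w) else 0) = 0 := by
      simp
    have h2 : (∑ b : Fin n, if (G.coupleMulti (⊤ : SimpleGraph (Fin n)) p
        (fun _ => Finset.univ)).Adj (Sum.inr a) (Sum.inr b) then Sum.elim (0 : V → ℝ) g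
        (Sum.inr b) else 0) = - g a := by
      simp only [SimpleGraph.coupleMulti, SimpleGraph.top_adj, Sum.elim_inr]
      have step : ∀ x : Fin n, (if a ≠ x then g x else 0) = g x - (if a = x then g x else 0) := by
        intro x
        by_cases hx : a = x <;> simp [hx]
      simp only [step]
      rw [Finset.sum_sub_distrib, hg, Finset.sum_ite_eq Finset.univ a g,
        if_pos (Finset.mem_univ a)]
      ring
    rw [h1, h2, zero_add, couple_deg_inr G p hp (by omega) a, Sum.elim_inr]
    field_simp
    ring

end Aux2

/-- extension by zero as a linear map -/
def elimZeroL (V : Type*) (n : ℕ) : (Fin n → ℝ) →ₗ[ℝ] (V ⊕ Fin n → ℝ) where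
  toFun g := Sum.elim 0 g
  map_add' g h := by funext x; cases x <;> simp
  map_smul' c g := by funext x; cases x <;> simp

/-- summation as a linear map -/
def sumL (n : ℕ) : (Fin n → ℝ) →ₗ[ℝ] ℝ where
  toFun g := ∑ b, g b
  map_add' g h := by simp [Finset.sum_add_distrib]
  map_smul' c g := by simp [Finset.mul_sum]


/-- **Corollary 4.** Join each of the distinct vertices `p 1, …, p k` of `Γ`
to every vertex of a complete graph `K_n` (`n ≥ 2`) disjoint from `Γ`.  Then
`(n+k)/(n+k-1)` is an eigenvalue of the normalized Laplacian of the coupled graph with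
multiplicity at least `n - 1`. -/
theorem coupleMulti_complete_eigenvalue
    {V : Type*} [Fintype V] [DecidableEq V] (G : SimpleGraph V) [DecidableRel G.Adj]
    (n : ℕ) (hn : 2 ≤ n) (k : ℕ) (p : Fin k → V) (hp : Function.Injective p)
    (hdeg : ∀ x, 0 < (G.coupleMulti (⊤ : SimpleGraph (Fin n)) p
      (fun _ => Finset.univ)).degree x) :
    (G.coupleMulti (⊤ : SimpleGraph (Fin n)) p (fun _ => Finset.univ)).IsLapEigenvalue
        (((n : ℝ) + (k : ℝ)) / ((n : ℝ) + (k : ℝ) - 1))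
      ∧ n - 1 ≤ Module.finrank ℝ
        ((G.coupleMulti (⊤ : SimpleGraph (Fin n)) p (fun _ => Finset.univ)).lapEigenspace
          (((n : ℝ) + (k : ℝ)) / ((n : ℝ) + (k : ℝ) - 1))) := by
  have h01 : (⟨0, by omega⟩ : Fin n) ≠ ⟨1, by omega⟩ := by
    intro h
    simpa using congrArg Fin.val h
  constructor
  · -- eigenvalue
    set g : Fin n → ℝ := Pi.single (⟨0, by omega⟩ : Fin n) 1 - Pi.single ⟨1, by omega⟩ 1 with hg
    have hsum : ∑ b, g b = 0 := by
      simp [hg, Pi.sub_apply, Finset.sum_sub_distrib, Pi.single_apply]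
    refine ⟨Sum.elim (0 : V → ℝ) g, ?_, couple_mem_eigenspace G p hp hn g hsum⟩
    intro h0
    have := congrFun h0 (Sum.inr ⟨0, by omega⟩)
    simp [hg, Pi.single_apply, h01] at this
  · -- multiplicity
    set S := (G.coupleMulti (⊤ : SimpleGraph (Fin n)) p (fun _ => Finset.univ)).lapEigenspace
      (((n : ℝ) + (k : ℝ)) / ((n : ℝ) + (k : ℝ) - 1)) with hS
    have hmem : ∀ x : LinearMap.ker (sumL n),
        ((elimZeroL V n).comp (LinearMap.ker (sumL n)).subtype) x ∈ S := by
      rintro ⟨g, hg⟩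
      exact couple_mem_eigenspace G p hp hn g (LinearMap.mem_ker.mp hg)
    set φ : LinearMap.ker (sumL n) →ₗ[ℝ] S :=
      LinearMap.codRestrict S ((elimZeroL V n).comp (LinearMap.ker (sumL n)).subtype) hmem
      with hφ
    have hinj : Function.Injective φ := by
      intro x y hxy
      apply Subtype.ext
      have h1 : Sum.elim (0 : V → ℝ) x.1 = Sum.elim (0 : V → ℝ) y.1 := by
        have := congrArg Subtype.val hxy
        simpa [hφ, elimZeroL] using this
      funext b
      exact congrFun h1 (Sum.inr b)
    have hle := LinearMap.finrank_le_finrank_of_injective hinj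
    have hker : Module.finrank ℝ (LinearMap.ker (sumL n)) = n - 1 := by
      have hsurj : Function.Surjective (sumL n) := by
        intro r
        refine ⟨fun _ => r / n, ?_⟩
        have hn0 : (n : ℝ) ≠ 0 := by positivity
        simp [sumL, Finset.sum_const]
        field_simp
      have hrk := LinearMap.finrank_range_add_finrank_ker (sumL n)
      rw [LinearMap.range_eq_top.mpr hsurj, finrank_top] at hrk
      simp [Module.finrank_self, Module.finrank_pi] at hrk
      omega
    omega
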